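/- arXiv:1211.3724 — 4 statements merged into one kernel-verified Lean document; each statement's English description precedes it below -/
import Mathlib

section
/- Let X be a set and ψ₁, ψ₂ : X → ℝ∪{+∞}. Define v₁(τ) = inf{ψ₁(x) : x ∈ X, ψ₂(x) ≤ τ} and v₂(σ) = inf{ψ₂(x) : x ∈ X, ψ₁(x) ≤ σ}. Suppose τ is such that the set of minimizers of the problem defining v₁(τ) is nonempty and every minimizer x satisfies ψ₂(x) = τ. Then v₂(v₁(τ)) = τ. -/
noncomputable section

/-- Value function of `min ψ₁ s.t. ψ₂ ≤ τ`. -/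
def valFn {X : Type*} (ψ₁ ψ₂ : X → EReal) (τ : EReal) : EReal :=
  ⨅ x ∈ {x | ψ₂ x ≤ τ}, ψ₁ x

/-- Minimizers of `min ψ₁ s.t. ψ₂ ≤ τ`. -/
def argminSet {X : Type*} (ψ₁ ψ₂ : X → EReal) (τ : EReal) : Set X :=
  {x | ψ₂ x ≤ τ ∧ ψ₁ x = valFn ψ₁ ψ₂ τ}

section ValueFunction

variable {X : Type*} {ψ₁ ψ₂ : X → EReal} {τ : EReal} {x : X}

theorem valFn_le_of_le (h : ψ₂ x ≤ τ) : valFn ψ₁ ψ₂ τ ≤ ψ₁ x :=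
  iInf₂_le x h

theorem mem_argminSet_of_le (h₂ : ψ₂ x ≤ τ) (h₁ : ψ₁ x ≤ valFn ψ₁ ψ₂ τ) :
    x ∈ argminSet ψ₁ ψ₂ τ :=
  ⟨h₂, le_antisymm h₁ (valFn_le_of_le h₂)⟩

theorem valFn_valFn_le_of_mem_argminSet (hx : x ∈ argminSet ψ₁ ψ₂ τ) :
    valFn ψ₂ ψ₁ (valFn ψ₁ ψ₂ τ) ≤ τ :=
  (valFn_le_of_le hx.2.le).trans hx.1

/-- A point with `ψ₁ x ≤ v₁ τ` and `ψ₂ x < τ` would be an inactive minimizer. -/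
theorem le_valFn_valFn (hact : ∀ x ∈ argminSet ψ₁ ψ₂ τ, ψ₂ x = τ) :
    τ ≤ valFn ψ₂ ψ₁ (valFn ψ₁ ψ₂ τ) := by
  refine le_iInf₂ fun x (hx : ψ₁ x ≤ valFn ψ₁ ψ₂ τ) => ?_
  rcases le_total (ψ₂ x) τ with h | h
  · exact (hact x (mem_argminSet_of_le h hx)).ge
  · exact h

end ValueFunction

/-- if the argmin of `min{ψ₁ : ψ₂ ≤ τ}` is nonempty and every minimizer
is active (`ψ₂ x = τ`), then `v₂ (v₁ τ) = τ`. -/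
theorem stmt0 {X : Type*} (ψ₁ ψ₂ : X → EReal) (τ : EReal)
    (hne : (argminSet ψ₁ ψ₂ τ).Nonempty)
    (hact : ∀ x ∈ argminSet ψ₁ ψ₂ τ, ψ₂ x = τ) :
    valFn ψ₂ ψ₁ (valFn ψ₁ ψ₂ τ) = τ := by
  obtain ⟨x₀, hx₀⟩ := hne
  exact le_antisymm (valFn_valFn_le_of_mem_argminSet hx₀) (le_valFn_valFn hact)
end
end

section
/- Let φ : ℝⁿ → ℝ∪{+∞} be closed, proper, convex, let τ > inf φ, let x̄ satisfy φ(x̄) ≤ τ, and let s̄ be in the normal cone to lev(φ,τ) at x̄. Define S₁ = argmin_{μ ≥ 0} [τμ + (φ*)^π(s̄, μ)] and S₂ = {μ̄ ≥ 0 : s̄ ∈ μ̄⁺∂φ(x̄) and μ̄(φ(x̄) − τ) = 0}, where μ⁺∂φ(x) = μ∂φ(x) if μ > 0 and the normal cone to dom φ at x if μ = 0. If either S₁ or S₂ is nonempty, then S₁ = S₂, and σ_{lev(φ,τ)}(s̄) = inf_{μ ≥ 0} [τμ + (φ*)^π(s̄, μ)]. -/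
/-! With `σ = ⟪s̄, x̄⟫ = σ_{lev(φ,τ)}(s̄)`, the dual function `Q(μ) = τμ + (φ*)^π(s̄, μ)` is bounded
above exactly by the bounds of the Lagrangian `⟪s̄, z⟫ + μ (τ - φ z)` on `dom φ`: for `μ > 0` this
is the definition of `φ*`, and for `μ = 0` the horizon function of `φ*` is the support function
of `dom φ` (given a point of `dom φ*`, which separation from the closed epigraph of `φ` provides).
Evaluating the Lagrangian at `x̄` gives `σ ≤ Q`. With a Slater point, the slopes `(σ - ⟪s̄, y⟫) / (τ - φ y)` over strictly
feasible `y` are nonnegative, and convexity of `φ` along segments crossing the level `τ` shows that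
their infimum `μ₀` bounds the Lagrangian by `σ`; hence `Q(μ₀) = σ = inf Q`. Finally `Q(μ) ≤ σ`
unwinds to `s̄ ∈ μ⁺∂φ(x̄)` with complementary slackness, so `S₁` and `S₂` are both the set of
`μ ≥ 0` with `Q(μ) = σ`. -/

open scoped Pointwise
noncomputable section

abbrev En (n : ℕ) := EuclideanSpace ℝ (Fin n)

/-- Fenchel conjugate. -/
def econj {n : ℕ} (h : En n → EReal) (y : En n) : EReal :=
  ⨆ x : En n, (((inner ℝ y x : ℝ)) : EReal) - h x

/-- Horizon (recession) function. -/
def ehorizon {n : ℕ} (h : En n → EReal) (z : En n) : EReal :=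
  ⨆ x ∈ {x : En n | h x ≠ ⊤}, (h (x + z) - h x)

/-- Closed perspective function. -/
def epersp {n : ℕ} (h : En n → EReal) (p : En n × ℝ) : EReal :=
  if 0 < p.2 then ((p.2 : ℝ) : EReal) * h (p.2⁻¹ • p.1)
  else if p.2 = 0 then ehorizon h p.1 else ⊤

/-- Support function of a set. -/
def esupp {n : ℕ} (C : Set (En n)) (y : En n) : EReal :=
  ⨆ x ∈ C, (((inner ℝ y x : ℝ)) : EReal)

/-- A proper function: somewhere finite and never `-∞`. -/
def IsProperFn {n : ℕ} (h : En n → EReal) : Prop := (∃ x, h x ≠ ⊤) ∧ ∀ x, h x ≠ ⊥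

/-- Convexity of an extended-real-valued function, via convexity of its epigraph. -/
def IsConvexFn {n : ℕ} (h : En n → EReal) : Prop :=
  Convex ℝ {p : En n × ℝ | h p.1 ≤ (p.2 : EReal)}

/-- Normal cone to a convex set `C` at `x` (empty when `x ∉ C`). -/
def enormalCone {n : ℕ} (C : Set (En n)) (x : En n) : Set (En n) :=
  {v | x ∈ C ∧ ∀ y ∈ C, (inner ℝ v (y - x) : ℝ) ≤ 0}

/-- Convex subdifferential of an extended-real-valued function. -/
def esubdiff {n : ℕ} (h : En n → EReal) (x : En n) : Set (En n) :=
  {v | ∀ y : En n, h x + (((inner ℝ v (y - x) : ℝ)) : EReal) ≤ h y}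

/-- `μ⁺∂φ(x)`: `μ ∂φ(x)` for `μ > 0`, the normal cone to `dom φ` for `μ = 0`. -/
def muPlusSubdiff {n : ℕ} (μ : ℝ) (h : En n → EReal) (x : En n) : Set (En n) :=
  if 0 < μ then μ • esubdiff h x else enormalCone {y | h y ≠ ⊤} x

variable {n : ℕ} {φ : En n → EReal}

lemma IsProperFn.exists_eq_coe (hproper : IsProperFn φ) {z : En n} (hz : φ z ≠ ⊤) :
    ∃ r : ℝ, φ z = r :=
  ⟨(φ z).toReal, (EReal.coe_toReal hz (hproper.2 z)).symm⟩

lemma IsConvexFn.map_combo_le (hconvex : IsConvexFn φ) {x y : En n} {r q a b : ℝ}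
    (hx : φ x ≤ r) (hy : φ y ≤ q) (ha : 0 ≤ a) (hb : 0 ≤ b) (hab : a + b = 1) :
    φ (a • x + b • y) ≤ ((a * r + b * q : ℝ) : EReal) := by
  simpa using hconvex (x := (x, r)) (y := (y, q)) hx hy ha hb hab

lemma isClosed_epigraph (hclosed : LowerSemicontinuous φ) :
    IsClosed {p : En n × ℝ | φ p.1 ≤ p.2} :=
  (lowerSemicontinuous_iff_isClosed_epigraph.1 hclosed).preimage
    (continuous_fst.prodMk (continuous_coe_real_ereal.comp continuous_snd))

lemma esupp_eq_inner_of_mem_enormalCone {C : Set (En n)} {x s : En n}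
    (hs : s ∈ enormalCone C x) : esupp C s = ((inner ℝ s x : ℝ) : EReal) := by
  refine le_antisymm (iSup₂_le fun y hy => ?_) (le_iSup₂_of_le x hs.1 le_rfl)
  have := hs.2 y hy
  rw [inner_sub_right] at this
  exact EReal.coe_le_coe_iff.2 (by linarith)

lemma coe_inner_sub_le_econj (y : En n) {z : En n} {r : ℝ} (hz : φ z = r) :
    ((inner ℝ y z - r : ℝ) : EReal) ≤ econj φ y := by
  rw [EReal.coe_sub, ← hz]
  exact le_iSup (fun x => ((inner ℝ y x : ℝ) : EReal) - φ x) z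

lemma econj_le_coe (hproper : IsProperFn φ) {y : En n} {c : ℝ}
    (h : ∀ z (r : ℝ), φ z = r → inner ℝ y z - r ≤ c) : econj φ y ≤ c := by
  refine iSup_le fun z => ?_
  by_cases hz : φ z = ⊤
  · simp [hz]
  · obtain ⟨r, hr⟩ := hproper.exists_eq_coe hz
    rw [hr, ← EReal.coe_sub, EReal.coe_le_coe_iff]
    exact h z r hr

lemma IsProperFn.econj_eq_coe (hproper : IsProperFn φ) {y : En n} (hy : econj φ y ≠ ⊤) :
    ∃ ρ : ℝ, econj φ y = ρ := by
  obtain ⟨z, hz⟩ := hproper.1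
  obtain ⟨r, hr⟩ := hproper.exists_eq_coe hz
  exact ⟨(econj φ y).toReal, (EReal.coe_toReal hy
    (ne_bot_of_le_ne_bot (EReal.coe_ne_bot _) (coe_inner_sub_le_econj y hr))).symm⟩

-- Separating a point strictly below the closed epigraph yields an affine minorant of `φ`.
lemma exists_econj_ne_top (hclosed : LowerSemicontinuous φ) (hproper : IsProperFn φ)
    (hconvex : IsConvexFn φ) : ∃ a : En n, econj φ a ≠ ⊤ := by
  obtain ⟨x₀, hx₀⟩ := hproper.1
  obtain ⟨r₀, hr₀⟩ := hproper.exists_eq_coe hx₀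
  have hout : (x₀, r₀ - 1) ∉ {p : En n × ℝ | φ p.1 ≤ p.2} := by
    simp only [Set.mem_ofPred_eq, hr₀, EReal.coe_le_coe_iff]
    linarith
  obtain ⟨f, u, hfu, hf⟩ :=
    geometric_hahn_banach_point_closed hconvex (isClosed_epigraph hclosed) hout
  set b : ℝ := f (0, 1)
  have hsplit : ∀ z (t : ℝ), f (z, t) = f (z, 0) + t * b := fun z t => by
    rw [show (z, t) = (z, 0) + t • ((0 : En n), (1 : ℝ)) by simp, map_add, map_smul, smul_eq_mul]
  have hb : 0 < b := by
    have := hf (x₀, r₀) (by simp [hr₀])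
    rw [hsplit] at this hfu
    linarith
  set a : En n := (-b⁻¹) • (InnerProductSpace.toDual ℝ (En n)).symm
    (f.comp (ContinuousLinearMap.inl ℝ (En n) ℝ))
  have hinner : ∀ z, inner ℝ a z = -b⁻¹ * f (z, 0) := fun z => by
    simp [a, real_inner_smul_left, InnerProductSpace.toDual_symm_apply]
  refine ⟨a, ne_top_of_le_ne_top (EReal.coe_ne_top (-u / b))
    (econj_le_coe hproper fun z r hr => ?_)⟩
  have := hf (z, r) (by simp [hr])
  rw [hsplit] at this
  rw [hinner, le_div_iff₀ hb]
  field_simp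
  linarith

lemma apply_add_smul_le_of_sub_le {E : Type*} [AddCommGroup E] [Module ℝ E] {h : E → EReal}
    {a s : E} {A c : ℝ} (hstep : ∀ x, h x ≠ ⊤ → h (x + s) - h x ≤ c) (ha : h a ≤ A) (k : ℕ) :
    h (a + (k : ℝ) • s) ≤ ((A + k * c : ℝ) : EReal) := by
  induction k with
  | zero => simpa using ha
  | succ k ih =>
    have hne : h (a + (k : ℝ) • s) ≠ ⊤ := ne_top_of_le_ne_top (EReal.coe_ne_top _) ih
    have hle := (EReal.sub_le_iff_le_add (.inr (EReal.coe_ne_top c))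
      (.inr (EReal.coe_ne_bot c))).1 (hstep _ hne)
    calc h (a + ((k + 1 : ℕ) : ℝ) • s) = h (a + (k : ℝ) • s + s) := by
          rw [Nat.cast_succ, add_smul, one_smul, add_assoc]
      _ ≤ c + ((A + k * c : ℝ) : EReal) := hle.trans (by gcongr)
      _ = ((A + (k + 1 : ℕ) * c : ℝ) : EReal) := by
          rw [← EReal.coe_add]; congr 1; push_cast; ring

lemma ehorizon_econj_le (hproper : IsProperFn φ) {s : En n} {c : ℝ}
    (hc : ∀ z, φ z ≠ ⊤ → inner ℝ s z ≤ c) : ehorizon (econj φ) s ≤ c := by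
  refine iSup₂_le fun x hx => ?_
  obtain ⟨ρ, hρ⟩ := hproper.econj_eq_coe hx
  rw [hρ, EReal.sub_le_iff_le_add (.inl (EReal.coe_ne_bot ρ)) (.inl (EReal.coe_ne_top ρ)),
    ← EReal.coe_add]
  refine econj_le_coe hproper fun z r hr => ?_
  have := EReal.coe_le_coe_iff.1 (hρ ▸ coe_inner_sub_le_econj x hr)
  have := hc z (by simp [hr])
  rw [inner_add_left]
  linarith

-- The horizon function of `φ*` dominates the support function of `dom φ`: along `a + k s` the
-- conjugate grows at most like `k` times the horizon value, and at least like `k ⟪s, y⟫`.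
lemma inner_le_ehorizon_econj (hproper : IsProperFn φ) {a : En n} (ha : econj φ a ≠ ⊤)
    {y : En n} (hy : φ y ≠ ⊤) (s : En n) :
    ((inner ℝ s y : ℝ) : EReal) ≤ ehorizon (econj φ) s := by
  by_contra! hlt
  obtain ⟨c, hHc, hcs⟩ := EReal.lt_iff_exists_real_btwn.1 hlt
  obtain ⟨A, hA⟩ := hproper.econj_eq_coe ha
  obtain ⟨r, hr⟩ := hproper.exists_eq_coe hy
  have hstep : ∀ x, econj φ x ≠ ⊤ → econj φ (x + s) - econj φ x ≤ c := fun x hx =>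
    (le_iSup₂_of_le (f := fun x (_ : econj φ x ≠ ⊤) => econj φ (x + s) - econj φ x) x hx
      le_rfl).trans hHc.le
  have hgrowth : ∀ k : ℕ, k * (inner ℝ s y - c) ≤ A + r - inner ℝ a y := fun k => by
    have := EReal.coe_le_coe_iff.1 ((coe_inner_sub_le_econj (a + (k : ℝ) • s) hr).trans
      (apply_add_smul_le_of_sub_le hstep hA.le k))
    rw [inner_add_left, real_inner_smul_left] at this
    linarith
  obtain ⟨k, hk⟩ := exists_nat_gt ((A + r - inner ℝ a y) / (inner ℝ s y - c))
  have hpos : 0 < inner ℝ s y - c := sub_pos.2 (EReal.coe_lt_coe_iff.1 hcs)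
  rw [div_lt_iff₀ hpos] at hk
  linarith [hgrowth k]

section Duality

/-- `Q(μ) = τ μ + (φ*)^π(s, μ)`, the dual function of `sup {⟪s, x⟫ | φ x ≤ τ}`. -/
def lagrangeDual (φ : En n → EReal) (τ : ℝ) (s : En n) (μ : ℝ) : EReal :=
  ((τ * μ : ℝ) : EReal) + epersp (econj φ) (s, μ)

def LagrangianLE (φ : En n → EReal) (τ : ℝ) (s : En n) (μ c : ℝ) : Prop :=
  ∀ z (q : ℝ), φ z = q → inner ℝ s z + μ * (τ - q) ≤ c

variable {τ μ c : ℝ} {s : En n}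

lemma lagrangeDual_def :
    lagrangeDual φ τ s μ = ((τ * μ : ℝ) : EReal) + epersp (econj φ) (s, μ) :=
  rfl

lemma lagrangeDual_of_pos (hμ : 0 < μ) :
    lagrangeDual φ τ s μ = ((τ * μ : ℝ) : EReal) + μ * econj φ (μ⁻¹ • s) := by
  simp [lagrangeDual, epersp, hμ]

lemma lagrangeDual_zero : lagrangeDual φ τ s 0 = ehorizon (econj φ) s := by
  simp [lagrangeDual, epersp]

lemma lagrangeDual_le_of_lagrangianLE (hproper : IsProperFn φ) (hμ : 0 ≤ μ)
    (h : LagrangianLE φ τ s μ c) : lagrangeDual φ τ s μ ≤ c := by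
  rcases hμ.eq_or_lt with rfl | hμ
  · rw [lagrangeDual_zero]
    refine ehorizon_econj_le hproper fun z hz => ?_
    obtain ⟨q, hq⟩ := hproper.exists_eq_coe hz
    simpa using h z q hq
  · have hconj : econj φ (μ⁻¹ • s) ≤ (((c - τ * μ) / μ : ℝ) : EReal) :=
      econj_le_coe hproper fun z q hq => by
        rw [real_inner_smul_left, le_div_iff₀ hμ]
        have := h z q hq
        field_simp
        linarith
    calc lagrangeDual φ τ s μ
        ≤ ((τ * μ : ℝ) : EReal) + μ * (((c - τ * μ) / μ : ℝ) : EReal) := by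
          rw [lagrangeDual_of_pos hμ]
          gcongr
      _ = c := by
          rw [← EReal.coe_mul, ← EReal.coe_add, mul_div_cancel₀ _ hμ.ne', add_sub_cancel]

lemma coe_lagrangian_le_lagrangeDual (hproper : IsProperFn φ) (hdom : ∃ a, econj φ a ≠ ⊤)
    (hμ : 0 ≤ μ) {z : En n} {q : ℝ} (hz : φ z = q) :
    ((inner ℝ s z + μ * (τ - q) : ℝ) : EReal) ≤ lagrangeDual φ τ s μ := by
  rcases hμ.eq_or_lt with rfl | hμ
  · rw [lagrangeDual_zero]
    simpa using inner_le_ehorizon_econj hproper hdom.choose_spec (by simp [hz]) s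
  · have hconj := coe_inner_sub_le_econj (μ⁻¹ • s) hz
    rw [real_inner_smul_left] at hconj
    calc ((inner ℝ s z + μ * (τ - q) : ℝ) : EReal)
        = ((τ * μ : ℝ) : EReal) + μ * ((μ⁻¹ * inner ℝ s z - q : ℝ) : EReal) := by
          rw [← EReal.coe_mul, ← EReal.coe_add]
          congr 1
          field_simp
          ring
      _ ≤ lagrangeDual φ τ s μ := by
          rw [lagrangeDual_of_pos hμ]
          gcongr

lemma lagrangeDual_le_coe_iff (hproper : IsProperFn φ) (hdom : ∃ a, econj φ a ≠ ⊤)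
    (hμ : 0 ≤ μ) : lagrangeDual φ τ s μ ≤ c ↔ LagrangianLE φ τ s μ c :=
  ⟨fun h _ _ hz =>
    EReal.coe_le_coe_iff.1 ((coe_lagrangian_le_lagrangeDual hproper hdom hμ hz).trans h),
    lagrangeDual_le_of_lagrangianLE hproper hμ⟩

end Duality

section Multiplier

variable {τ σ : ℝ} {s : En n}

lemma mul_inner_sub_le_of_lt_of_lt (hconvex : IsConvexFn φ)
    (hlev : ∀ z, φ z ≤ τ → inner ℝ s z ≤ σ) {y z : En n} {r q : ℝ} (hy : φ y = r)
    (hz : φ z = q) (hr : r < τ) (hq : τ < q) :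
    (τ - r) * (inner ℝ s z - σ) ≤ (q - τ) * (σ - inner ℝ s y) := by
  have hqr : 0 < q - r := by linarith
  have hcombo := hconvex.map_combo_le hz.le hy.le (div_nonneg (sub_nonneg.2 hr.le) hqr.le)
    (div_nonneg (sub_nonneg.2 hq.le) hqr.le) (by field_simp; ring)
  have hlevel : (τ - r) / (q - r) * q + (q - τ) / (q - r) * r = τ := by
    field_simp
    ring
  have key := hlev _ (hcombo.trans_eq (congrArg _ hlevel))
  rw [inner_add_right, real_inner_smul_right, real_inner_smul_right, div_mul_eq_mul_div,
    div_mul_eq_mul_div, ← add_div, div_le_iff₀ hqr] at key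
  linarith

-- The multiplier is the least slope `(σ - ⟪s, y⟫) / (τ - φ y)` over strictly feasible `y`.
lemma exists_lagrangianLE (hproper : IsProperFn φ) (hconvex : IsConvexFn φ)
    (hslater : ∃ y, φ y < τ) (hlev : ∀ z, φ z ≤ τ → inner ℝ s z ≤ σ) :
    ∃ μ, 0 ≤ μ ∧ LagrangianLE φ τ s μ σ := by
  set T : Set ℝ := {t | ∃ y, ∃ r : ℝ, φ y = r ∧ r < τ ∧ t = (σ - inner ℝ s y) / (τ - r)}
  have hT_nonneg : ∀ t ∈ T, 0 ≤ t := by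
    rintro t ⟨y, r, hy, hr, rfl⟩
    exact div_nonneg (sub_nonneg.2 (hlev y (hy ▸ EReal.coe_le_coe_iff.2 hr.le)))
      (sub_nonneg.2 hr.le)
  have hT : T.Nonempty := by
    obtain ⟨y, hy⟩ := hslater
    obtain ⟨r, hr⟩ := hproper.exists_eq_coe (ne_top_of_lt hy)
    exact ⟨_, y, r, hr, EReal.coe_lt_coe_iff.1 (hr ▸ hy), rfl⟩
  refine ⟨sInf T, le_csInf hT hT_nonneg, fun z q hz => ?_⟩
  rcases lt_trichotomy q τ with hq | rfl | hq
  · have := csInf_le ⟨0, hT_nonneg⟩ ⟨z, q, hz, hq, rfl⟩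
    rw [le_div_iff₀ (sub_pos.2 hq)] at this
    linarith
  · simpa using hlev z hz.le
  · have : (inner ℝ s z - σ) / (q - τ) ≤ sInf T := le_csInf hT <| by
      rintro t ⟨y, r, hy, hr, rfl⟩
      rw [div_le_div_iff₀ (sub_pos.2 hq) (sub_pos.2 hr)]
      linarith [mul_inner_sub_le_of_lt_of_lt hconvex hlev hy hz hr hq]
    rw [div_le_iff₀ (sub_pos.2 hq)] at this
    linarith

end Multiplier

lemma mem_muPlusSubdiff_and_slack_iff (hproper : IsProperFn φ) {τ μ r : ℝ} {x s : En n}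
    (hx : φ x = r) (hrτ : r ≤ τ) (hμ : 0 ≤ μ) :
    (s ∈ muPlusSubdiff μ φ x ∧ (μ : EReal) * (φ x - τ) = 0) ↔
      LagrangianLE φ τ s μ (inner ℝ s x) := by
  rcases hμ.eq_or_lt with rfl | hμ
  · simp only [muPlusSubdiff, enormalCone, LagrangianLE, lt_irrefl, if_false, EReal.coe_zero,
      zero_mul, and_true, add_zero, Set.mem_ofPred_eq]
    constructor
    · rintro ⟨-, h⟩ z q hz
      have := h z (by simp [hz])
      rw [inner_sub_right] at this
      linarith
    · refine fun h => ⟨by simp [hx], fun y hy => ?_⟩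
      obtain ⟨q, hq⟩ := hproper.exists_eq_coe hy
      have := h y q hq
      rw [inner_sub_right]
      linarith
  · rw [muPlusSubdiff, if_pos hμ, hx, ← EReal.coe_sub, ← EReal.coe_mul, EReal.coe_eq_zero,
      mul_eq_zero, or_iff_right hμ.ne', sub_eq_zero, Set.mem_smul_set]
    constructor
    · rintro ⟨⟨v, hv, rfl⟩, rfl⟩ z q hz
      have := hv z
      rw [hx, hz, ← EReal.coe_add, EReal.coe_le_coe_iff, inner_sub_right] at this
      rw [real_inner_smul_left, real_inner_smul_left]
      nlinarith
    · intro h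
      have hrτ' : r = τ := le_antisymm hrτ (by nlinarith [h x r hx])
      refine ⟨⟨μ⁻¹ • s, fun y => ?_, smul_inv_smul₀ hμ.ne' s⟩, hrτ'⟩
      by_cases hy : φ y = ⊤
      · simp [hy]
      obtain ⟨q, hq⟩ := hproper.exists_eq_coe hy
      rw [hx, hq, ← EReal.coe_add, EReal.coe_le_coe_iff, real_inner_smul_left, inner_sub_right]
      have := mul_le_mul_of_nonneg_left (show inner ℝ s y - inner ℝ s x ≤ μ * (q - τ) by
        linarith [h y q hq]) (inv_nonneg.2 hμ.le)
      rw [inv_mul_cancel_left₀ hμ.ne'] at this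
      linarith

theorem stmt5_general {n : ℕ} (φ : En n → EReal)
    (hclosed : LowerSemicontinuous φ) (hproper : IsProperFn φ) (hconvex : IsConvexFn φ)
    (τ : ℝ) (hτ : (⨅ x, φ x) < (τ : EReal))
    (xbar : En n)
    (sbar : En n) (hs : sbar ∈ enormalCone {x | φ x ≤ (τ : EReal)} xbar)
    (S₁ S₂ : Set ℝ)
    (hS₁ : S₁ = {μ : ℝ | 0 ≤ μ ∧
      (((τ * μ : ℝ)) : EReal) + epersp (econj φ) (sbar, μ) =
        ⨅ μ' : ℝ, ⨅ _ : 0 ≤ μ', (((τ * μ' : ℝ)) : EReal) + epersp (econj φ) (sbar, μ')})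
    (hS₂ : S₂ = {μ : ℝ | 0 ≤ μ ∧ sbar ∈ muPlusSubdiff μ φ xbar ∧
      (μ : EReal) * (φ xbar - (τ : EReal)) = 0}) :
    S₁ = S₂ ∧
    esupp {x | φ x ≤ (τ : EReal)} sbar =
      ⨅ μ : ℝ, ⨅ _ : 0 ≤ μ, (((τ * μ : ℝ)) : EReal) + epersp (econj φ) (sbar, μ) := by
  subst hS₁ hS₂
  simp only [← lagrangeDual_def]
  obtain ⟨rx, hrx⟩ := hproper.exists_eq_coe (ne_top_of_le_ne_top (EReal.coe_ne_top τ) hs.1)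
  have hrxτ : rx ≤ τ := EReal.coe_le_coe_iff.1 (hrx ▸ hs.1)
  have hlev : ∀ z, φ z ≤ τ → inner ℝ sbar z ≤ inner ℝ sbar xbar := fun z hz => by
    linarith [inner_sub_right (𝕜 := ℝ) sbar z xbar ▸ hs.2 z hz]
  have hdom := exists_econj_ne_top hclosed hproper hconvex
  have hweak : ∀ μ, 0 ≤ μ → ((inner ℝ sbar xbar : ℝ) : EReal) ≤ lagrangeDual φ τ sbar μ :=
    fun μ hμ => (EReal.coe_le_coe_iff.2 (le_add_of_nonneg_right
      (mul_nonneg hμ (sub_nonneg.2 hrxτ)))).trans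
      (coe_lagrangian_le_lagrangeDual hproper hdom hμ hrx)
  obtain ⟨μ₀, hμ₀, hμ₀L⟩ := exists_lagrangianLE hproper hconvex (iInf_lt_iff.1 hτ) hlev
  have hinf : ⨅ μ, ⨅ _ : 0 ≤ μ, lagrangeDual φ τ sbar μ = inner ℝ sbar xbar :=
    le_antisymm ((iInf₂_le μ₀ hμ₀).trans (lagrangeDual_le_of_lagrangianLE hproper hμ₀ hμ₀L))
      (le_iInf₂ hweak)
  refine ⟨?_, by rw [hinf, esupp_eq_inner_of_mem_enormalCone hs]⟩
  ext μ
  simp only [Set.mem_ofPred_eq, hinf]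
  refine and_congr_right fun hμ => ?_
  rw [mem_muPlusSubdiff_and_slack_iff hproper hrx hrxτ hμ,
    ← lagrangeDual_le_coe_iff hproper hdom hμ]
  exact ⟨le_of_eq, fun h => le_antisymm h (hweak μ hμ)⟩

/-- Lemma on multipliers: under the stated assumptions, if either set
`S₁` or `S₂` is nonempty then `S₁ = S₂`, and the support function of the level set
equals `inf_{μ ≥ 0} [τμ + (φ*)^π(s̄, μ)]`. -/
theorem stmt5 {n : ℕ} (φ : En n → EReal)
    (hclosed : LowerSemicontinuous φ) (hproper : IsProperFn φ) (hconvex : IsConvexFn φ)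
    (τ : ℝ) (hτ : (⨅ x, φ x) < (τ : EReal))
    (xbar : En n) (hx : φ xbar ≤ (τ : EReal))
    (sbar : En n) (hs : sbar ∈ enormalCone {x | φ x ≤ (τ : EReal)} xbar)
    (S₁ S₂ : Set ℝ)
    (hS₁ : S₁ = {μ : ℝ | 0 ≤ μ ∧
      (((τ * μ : ℝ)) : EReal) + epersp (econj φ) (sbar, μ) =
        ⨅ μ' : ℝ, ⨅ _ : 0 ≤ μ', (((τ * μ' : ℝ)) : EReal) + epersp (econj φ) (sbar, μ')})
    (hS₂ : S₂ = {μ : ℝ | 0 ≤ μ ∧ sbar ∈ muPlusSubdiff μ φ xbar ∧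
      (μ : EReal) * (φ xbar - (τ : EReal)) = 0})
    (hne : S₁.Nonempty ∨ S₂.Nonempty) :
    S₁ = S₂ ∧
    esupp {x | φ x ≤ (τ : EReal)} sbar =
      ⨅ μ : ℝ, ⨅ _ : 0 ≤ μ, (((τ * μ : ℝ)) : EReal) + epersp (econj φ) (sbar, μ) :=
  stmt5_general φ hclosed hproper hconvex τ hτ xbar sbar hs S₁ S₂ hS₁ hS₂
end
end

section
/- Let U ⊂ ℝⁿ be nonempty closed convex with 0 ∈ U, B ∈ ℝ^{n×n} symmetric positive semidefinite, and φ(x) = sup_{w ∈ U} [⟨x,w⟩ − ½⟨w, Bw⟩]. Then φ(x) = inf_s [½‖s‖₂² + γ(x − Ls | U°)], where B = LLᵀ with L ∈ ℝ^{n×k} of rank k = rank B, and γ(·|U°) is the gauge of the polar set of U. -/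
/-!
Weak duality is Young's inequality `⟪s, Lᵀw⟫ ≤ ½‖s‖² + ½‖Lᵀw‖²` combined with
`⟪x - Ls, w⟫ ≤ γ(x - Ls | U°)` for `w ∈ U`.

For the reverse inequality let `a = φ(x)` be finite. On each compact truncation `U ∩ B(0, r)`
the concave function `w ↦ ⟪x, w⟫ - ½‖Lᵀw‖²` attains its maximum at some `w_r`, and the first-order
optimality condition says that `s = Lᵀw_r` satisfies `⟪x - Ls, w⟫ ≤ a - ½‖s‖²` for all `w` in the
truncation. These sets of admissible `s` are nonempty, closed, nested and bounded (take `w = 0`),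
so some `s` is admissible for all of `U`, which is exactly `½‖s‖² + γ(x - Ls | U°) ≤ a`.
-/

open scoped Pointwise
noncomputable section

/-- Extended-real-valued gauge (Minkowski functional) of a set. -/
def egaugeFn {n : ℕ} (U : Set (En n)) (x : En n) : EReal :=
  sInf {r : EReal | ∃ lam : ℝ, 0 ≤ lam ∧ x ∈ lam • U ∧ r = (lam : EReal)}

/-- Polar set. -/
def epolarSet {n : ℕ} (U : Set (En n)) : Set (En n) :=
  {v | ∀ u ∈ U, (inner ℝ v u : ℝ) ≤ 1}

/-- Quadratic support function `φ(x) = sup_{w ∈ U} [⟨x,w⟩ − ½⟨w,Bw⟩]`. -/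
def qsFn {n : ℕ} (U : Set (En n)) (B : En n →L[ℝ] En n) (x : En n) : EReal :=
  ⨆ w ∈ U, (((inner ℝ x w : ℝ) - (1 / 2) * (inner ℝ w (B w) : ℝ) : ℝ) : EReal)

open Set
open scoped RealInnerProductSpace
open ContinuousLinearMap (adjoint adjoint_inner_left adjoint_inner_right)

lemma EReal.le_biSup_coe_of_forall_bound {ι : Type*} {s : Set ι} {g : ι → ℝ} {β : EReal}
    (h : ∀ a : ℝ, (∀ i ∈ s, g i ≤ a) → β ≤ a) : β ≤ ⨆ i ∈ s, (g i : EReal) :=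
  EReal.le_of_forall_lt_iff_le.1 fun z hz => h z fun i hi =>
    EReal.coe_le_coe_iff.1 ((le_iSup₂ (f := fun i _ => (g i : EReal)) i hi).trans hz.le)

section Gauge

variable {n : ℕ} (U : Set (En n))

lemma inner_le_egaugeFn_epolarSet (y : En n) {w : En n} (hw : w ∈ U) :
    (⟪y, w⟫ : EReal) ≤ egaugeFn (epolarSet U) y := by
  refine le_sInf ?_
  rintro _ ⟨lam, hlam, ⟨v, hv, rfl⟩, rfl⟩
  rw [EReal.coe_le_coe_iff, real_inner_smul_left]
  simpa using mul_le_mul_of_nonneg_left (hv w hw) hlam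

lemma egaugeFn_epolarSet_le {y : En n} {c : ℝ} (hc : 0 ≤ c) (h : ∀ w ∈ U, ⟪y, w⟫ ≤ c) :
    egaugeFn (epolarSet U) y ≤ c := by
  refine EReal.le_of_forall_lt_iff_le.1 fun z hz => ?_
  have hcz : c < z := EReal.coe_lt_coe_iff.1 hz
  have hz0 : 0 < z := hc.trans_lt hcz
  refine sInf_le ⟨z, hz0.le, ⟨z⁻¹ • y, fun w hw => ?_, smul_inv_smul₀ hz0.ne' y⟩, rfl⟩
  rw [real_inner_smul_left, inv_mul_le_one₀ hz0]
  exact (h w hw).trans hcz.le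

end Gauge

section Quadratic

variable {E F : Type*} [NormedAddCommGroup E] [InnerProductSpace ℝ E]
  [NormedAddCommGroup F] [InnerProductSpace ℝ F]

lemma inner_sub_inner_nonpos_of_isMaxOn {W : Set E} (hW : Convex ℝ W) (T : E →L[ℝ] F)
    {x ws w : E} (hmax : IsMaxOn (fun u => ⟪x, u⟫ - 1 / 2 * ‖T u‖ ^ 2) W ws) (hws : ws ∈ W)
    (hw : w ∈ W) : ⟪x, w - ws⟫ - ⟪T ws, T (w - ws)⟫ ≤ 0 := by
  have hderiv : HasFDerivAt (fun u => ⟪x, u⟫ - 1 / 2 * ‖T u‖ ^ 2)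
      (innerSL ℝ x - (1 / 2 : ℝ) • 2 • (innerSL ℝ (T ws)).comp T) ws :=
    (innerSL ℝ x).hasFDerivAt.sub (T.hasFDerivAt.norm_sq.const_mul _)
  simpa using hmax.localize.hasFDerivWithinAt_nonpos hderiv.hasFDerivWithinAt
    (sub_mem_posTangentConeAt_of_segment_subset (hW.segment_subset hws hw))

lemma inner_sub_half_norm_sq_adjoint_le [CompleteSpace E] [CompleteSpace F] (L : F →L[ℝ] E)
    (x w : E) (s : F) : ⟪x, w⟫ - 1 / 2 * ‖adjoint L w‖ ^ 2 ≤ 1 / 2 * ‖s‖ ^ 2 + ⟪x - L s, w⟫ := by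
  rw [inner_sub_left, ← adjoint_inner_right]
  nlinarith [real_inner_le_norm s (adjoint L w), two_mul_le_add_sq ‖s‖ ‖adjoint L w‖]

lemma exists_forall_inner_sub_le_of_isCompact [CompleteSpace E] [CompleteSpace F]
    (L : F →L[ℝ] E) {W : Set E} (hWc : IsCompact W) (hWcv : Convex ℝ W) (hWne : W.Nonempty)
    (x : E) {a : ℝ} (ha : ∀ w ∈ W, ⟪x, w⟫ - 1 / 2 * ‖adjoint L w‖ ^ 2 ≤ a) :
    ∃ s : F, ∀ w ∈ W, ⟪x - L s, w⟫ ≤ a - 1 / 2 * ‖s‖ ^ 2 := by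
  obtain ⟨ws, hws, hmax⟩ := hWc.exists_isMaxOn hWne
    (by fun_prop : Continuous fun u => ⟪x, u⟫ - 1 / 2 * ‖adjoint L u‖ ^ 2).continuousOn
  refine ⟨adjoint L ws, fun w hw => ?_⟩
  have hvi := inner_sub_inner_nonpos_of_isMaxOn hWcv (adjoint L) hmax hws hw
  rw [adjoint_inner_right, inner_sub_right, inner_sub_right] at hvi
  have hself : ⟪L (adjoint L ws), ws⟫ = ‖adjoint L ws‖ ^ 2 := by
    rw [← adjoint_inner_right, real_inner_self_eq_norm_sq]
  rw [inner_sub_left]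
  linarith [ha ws hws]

lemma exists_forall_inner_sub_le [ProperSpace E] [ProperSpace F] (L : F →L[ℝ] E) {U : Set E}
    (hUcl : IsClosed U) (hUcv : Convex ℝ U) (hU0 : 0 ∈ U) (x : E) {a : ℝ}
    (ha : ∀ w ∈ U, ⟪x, w⟫ - 1 / 2 * ‖adjoint L w‖ ^ 2 ≤ a) :
    ∃ s : F, ∀ w ∈ U, ⟪x - L s, w⟫ ≤ a - 1 / 2 * ‖s‖ ^ 2 := by
  set K : ℕ → Set F := fun r =>
    {s | ∀ w ∈ U ∩ Metric.closedBall 0 r, ⟪x - L s, w⟫ ≤ a - 1 / 2 * ‖s‖ ^ 2}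
  have hK_closed (r : ℕ) : IsClosed (K r) := by
    simp only [K, ofPred_forall]
    exact isClosed_biInter fun w _ => isClosed_le (by fun_prop) (by fun_prop)
  have hK_anti (r : ℕ) : K (r + 1) ⊆ K r := fun s hs w hw =>
    hs w ⟨hw.1, Metric.closedBall_subset_closedBall (by simp) hw.2⟩
  have hK_ne (r : ℕ) : (K r).Nonempty :=
    exists_forall_inner_sub_le_of_isCompact L ((isCompact_closedBall 0 _).inter_left hUcl)
      (hUcv.inter (convex_closedBall 0 _)) ⟨0, hU0, by simp⟩ x fun w hw => ha w hw.1
  have hK0 : IsCompact (K 0) := by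
    refine (isCompact_closedBall (0 : F) √(2 * a)).of_isClosed_subset (hK_closed 0) fun s hs => ?_
    have : 1 / 2 * ‖s‖ ^ 2 ≤ a := by simpa using hs 0 ⟨hU0, by simp⟩
    rw [mem_closedBall_zero_iff, Real.le_sqrt (norm_nonneg s) (by linarith [sq_nonneg ‖s‖])]
    linarith
  obtain ⟨s, hs⟩ := hK0.nonempty_iInter_of_sequence_nonempty_isCompact_isClosed K hK_anti hK_ne
    hK_closed
  refine ⟨s, fun w hw => ?_⟩
  obtain ⟨r, hr⟩ := exists_nat_ge ‖w‖
  exact mem_iInter.1 hs r w ⟨hw, mem_closedBall_zero_iff.2 hr⟩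

end Quadratic

theorem stmt13_general {n k : ℕ} (U : Set (En n))
    (hUcl : IsClosed U) (hUcv : Convex ℝ U) (hU0 : (0 : En n) ∈ U)
    (B : En n →L[ℝ] En n)
    (L : En k →L[ℝ] En n)
    (hL : ∀ w : En n, B w = L (ContinuousLinearMap.adjoint L w)) :
    ∀ x : En n,
      qsFn U B x =
        ⨅ s : En k,
          ((((1 / 2) * ‖s‖ ^ 2 : ℝ)) : EReal) + egaugeFn (epolarSet U) (x - L s) := by
  intro x
  have hB (w : En n) : ⟪w, B w⟫ = ‖adjoint L w‖ ^ 2 := by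
    rw [hL, ← adjoint_inner_left, real_inner_self_eq_norm_sq]
  simp only [qsFn, hB]
  refine le_antisymm (iSup₂_le fun w hw => le_iInf fun s => ?_)
    (EReal.le_biSup_coe_of_forall_bound fun a ha => ?_)
  · calc ((⟪x, w⟫ - 1 / 2 * ‖adjoint L w‖ ^ 2 : ℝ) : EReal)
        ≤ ((1 / 2 * ‖s‖ ^ 2 + ⟪x - L s, w⟫ : ℝ) : EReal) :=
          EReal.coe_le_coe_iff.2 (inner_sub_half_norm_sq_adjoint_le L x w s)
      _ ≤ _ := by
          rw [EReal.coe_add]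
          gcongr
          exact inner_le_egaugeFn_epolarSet U _ hw
  · obtain ⟨s, hs⟩ := exists_forall_inner_sub_le L hUcl hUcv hU0 x ha
    have hc : 0 ≤ a - 1 / 2 * ‖s‖ ^ 2 := by simpa using hs 0 hU0
    calc ⨅ s', ((1 / 2 * ‖s'‖ ^ 2 : ℝ) : EReal) + egaugeFn (epolarSet U) (x - L s')
        ≤ ((1 / 2 * ‖s‖ ^ 2 : ℝ) : EReal) + egaugeFn (epolarSet U) (x - L s) := iInf_le _ s
      _ ≤ ((1 / 2 * ‖s‖ ^ 2 : ℝ) : EReal) + ((a - 1 / 2 * ‖s‖ ^ 2 : ℝ) : EReal) := by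
          gcongr
          exact egaugeFn_epolarSet_le U hc hs
      _ = a := by rw [← EReal.coe_add, add_sub_cancel]

/-- with `B = L Lᵀ` (`L` of full column rank),
`φ(x) = inf_s [½‖s‖² + γ(x − Ls | U°)]`. -/
theorem stmt13 {n k : ℕ} (U : Set (En n))
    (hUne : U.Nonempty) (hUcl : IsClosed U) (hUcv : Convex ℝ U) (hU0 : (0 : En n) ∈ U)
    (B : En n →L[ℝ] En n)
    (hsymm : ∀ x y : En n, (inner ℝ (B x) y : ℝ) = (inner ℝ x (B y) : ℝ))
    (hpsd : ∀ x : En n, 0 ≤ (inner ℝ x (B x) : ℝ))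
    (L : En k →L[ℝ] En n)
    (hL : ∀ w : En n, B w = L (ContinuousLinearMap.adjoint L w))
    (hLinj : Function.Injective L) :
    ∀ x : En n,
      qsFn U B x =
        ⨅ s : En k,
          ((((1 / 2) * ‖s‖ ^ 2 : ℝ)) : EReal) + egaugeFn (epolarSet U) (x - L s) :=
  stmt13_general U hUcl hUcv hU0 B L hL
end
end

section
/- Let φ(x) = sup_{w ∈ U} [⟨x,w⟩ − ½⟨w,Bw⟩] with U ⊂ ℝⁿ nonempty closed convex containing 0 and B positive semidefinite, and let τ > 0. Then the support function of lev(φ,τ) is given by: σ_{lev(φ,τ)}(w) = τγ(w|U) + ‖w‖_B²/(2γ(w|U)) if γ(w|U) > ‖w‖_B/√(2τ), and σ_{lev(φ,τ)}(w) = √(2τ)‖w‖_B if γ(w|U) ≤ ‖w‖_B/√(2τ), where ‖w‖_B = √(⟨w, Bw⟩). Moreover the infimum inf_{λ≥0}[τλ + (φ*)^π(w,λ)] is attained at λ = max{γ(w|U), ‖w‖_B/√(2τ)}. -/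
/-!
The conjugate of `φ` is `φ*(y) = ½⟨y, By⟩ + δ(y | U)`, so for `μ > 0` the perspective
`(φ*)^π(w, μ)` equals `‖w‖_B² / (2μ)` when `w ∈ μU` and `+∞` otherwise. If `w = μu` with `u ∈ U`
and `φ(x) ≤ τ`, then `⟨w, x⟩ = μ⟨x, u⟩ ≤ τμ + ‖w‖_B² / (2μ)`: this is weak duality,
`σ(w) ≤ τμ + (φ*)^π(w, μ)`.

Lower bounds come from explicit points of the level set. If `⟨z, ·⟩ ≤ 1` on `U` and
`α² ‖w‖_B² / 2 ≤ τ`, then `x = α Bw + (τ - α² ‖w‖_B² / 2) z` has `φ(x) ≤ τ`, by the Young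
inequality `α⟨Bw, u⟩ - ½⟨u, Bu⟩ ≤ α² ‖w‖_B² / 2`. With `z = 0` and `α = √(2τ) / ‖w‖_B` this
gives `√(2τ) ‖w‖_B`. With `α = 1/γ`, where `γ = γ(w | U)`, and `z` separating `w / t` from `U`
for `t < γ`, it gives values that tend to `τγ + ‖w‖_B² / (2γ)`. These lower bounds meet the
weak-duality bound at `μ = max {γ, ‖w‖_B / √(2τ)}`. This gives both formulas and shows that the
infimum is attained there.
-/
open scoped Pointwise
noncomputable section

open scoped InnerProductSpace
open Set Filter Topology

section PositiveSemidefinite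

variable {E : Type*} [NormedAddCommGroup E] [InnerProductSpace ℝ E] {B : E →L[ℝ] E}

lemma inner_add_map_add (hB : ∀ x y, ⟪B x, y⟫_ℝ = ⟪x, B y⟫_ℝ) (x y : E) :
    ⟪x + y, B (x + y)⟫_ℝ = ⟪x, B x⟫_ℝ + 2 * ⟪x, B y⟫_ℝ + ⟪y, B y⟫_ℝ := by
  rw [map_add, inner_add_left, inner_add_right, inner_add_right, real_inner_comm (B x) y, hB x y]
  ring

lemma mul_inner_map_sub_half_le (hB : ∀ x y, ⟪B x, y⟫_ℝ = ⟪x, B y⟫_ℝ)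
    (hpsd : ∀ x, 0 ≤ ⟪x, B x⟫_ℝ) (α : ℝ) (v u : E) :
    α * ⟪B v, u⟫_ℝ - 1 / 2 * ⟪u, B u⟫_ℝ ≤ α ^ 2 / 2 * ⟪v, B v⟫_ℝ := by
  have h := hpsd (u + (-α) • v)
  rw [inner_add_map_add hB] at h
  simp only [map_smul, real_inner_smul_left, real_inner_smul_right] at h
  rw [real_inner_comm u (B v)]
  linarith

lemma inner_map_eq_zero_of_inner_self_eq_zero (hB : ∀ x y, ⟪B x, y⟫_ℝ = ⟪x, B y⟫_ℝ)
    (hpsd : ∀ x, 0 ≤ ⟪x, B x⟫_ℝ) {v : E} (hv : ⟪v, B v⟫_ℝ = 0) (x : E) : ⟪x, B v⟫_ℝ = 0 := by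
  by_contra hx
  set t := -(⟪x, B x⟫_ℝ + 1) / (2 * ⟪x, B v⟫_ℝ)
  have ht : 2 * (t * ⟪x, B v⟫_ℝ) = -(⟪x, B x⟫_ℝ + 1) := by
    simp only [t]
    field_simp
  have h := hpsd (x + t • v)
  rw [inner_add_map_add hB] at h
  simp only [map_smul, real_inner_smul_left, real_inner_smul_right, hv, ht] at h
  linarith

end PositiveSemidefinite

lemma exists_inner_le_one_lt_inner {E : Type*} [NormedAddCommGroup E] [InnerProductSpace ℝ E]
    [CompleteSpace E] {U : Set E} (hUcl : IsClosed U) (hUcv : Convex ℝ U) (hU0 : (0 : E) ∈ U)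
    {v : E} (hv : v ∉ U) : ∃ z : E, (∀ a ∈ U, ⟪z, a⟫_ℝ ≤ 1) ∧ 1 < ⟪z, v⟫_ℝ := by
  obtain ⟨f, c, hfU, hfv⟩ := geometric_hahn_banach_closed_point hUcv hUcl hv
  have hc : 0 < c := by simpa using hfU 0 hU0
  refine ⟨(InnerProductSpace.toDual ℝ E).symm (c⁻¹ • f), fun a ha => ?_, ?_⟩
  · rw [InnerProductSpace.toDual_symm_apply, _root_.smul_apply, smul_eq_mul,
      inv_mul_le_one₀ hc]
    exact (hfU a ha).le
  · rw [InnerProductSpace.toDual_symm_apply, _root_.smul_apply, smul_eq_mul,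
      one_lt_inv_mul₀ hc]
    exact hfv

section QuadraticSupport

variable {n : ℕ} {U : Set (En n)} {B : En n →L[ℝ] En n}

lemma qsFn_le_coe_iff {x : En n} {c : ℝ} :
    qsFn U B x ≤ c ↔ ∀ u ∈ U, ⟪x, u⟫_ℝ - 1 / 2 * ⟪u, B u⟫_ℝ ≤ c := by
  simp only [qsFn, iSup₂_le_iff, EReal.coe_le_coe_iff]

lemma coe_le_qsFn {x u : En n} (hu : u ∈ U) :
    ((⟪x, u⟫_ℝ - 1 / 2 * ⟪u, B u⟫_ℝ : ℝ) : EReal) ≤ qsFn U B x :=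
  le_iSup₂ (f := fun u (_ : u ∈ U) => ((⟪x, u⟫_ℝ - 1 / 2 * ⟪u, B u⟫_ℝ : ℝ) : EReal)) u hu

lemma qsFn_map_self (hB : ∀ x y, ⟪B x, y⟫_ℝ = ⟪x, B y⟫_ℝ) (hpsd : ∀ x, 0 ≤ ⟪x, B x⟫_ℝ)
    {y : En n} (hy : y ∈ U) : qsFn U B (B y) = ((1 / 2 * ⟪y, B y⟫_ℝ : ℝ) : EReal) := by
  refine le_antisymm (qsFn_le_coe_iff.2 fun u _ => ?_) ?_
  · simpa using mul_inner_map_sub_half_le hB hpsd 1 y u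
  · convert coe_le_qsFn (B := B) (x := B y) hy using 2
    rw [real_inner_comm]
    ring

lemma econj_qsFn_of_mem (hB : ∀ x y, ⟪B x, y⟫_ℝ = ⟪x, B y⟫_ℝ) (hpsd : ∀ x, 0 ≤ ⟪x, B x⟫_ℝ)
    {y : En n} (hy : y ∈ U) : econj (qsFn U B) y = ((1 / 2 * ⟪y, B y⟫_ℝ : ℝ) : EReal) := by
  refine le_antisymm (iSup_le fun x => ?_) ?_
  · calc (⟪y, x⟫_ℝ : EReal) - qsFn U B x
        ≤ (⟪y, x⟫_ℝ : EReal) - ((⟪x, y⟫_ℝ - 1 / 2 * ⟪y, B y⟫_ℝ : ℝ) : EReal) :=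
          EReal.sub_le_sub le_rfl (coe_le_qsFn hy)
      _ = ((1 / 2 * ⟪y, B y⟫_ℝ : ℝ) : EReal) := by
          rw [← EReal.coe_sub, real_inner_comm]
          ring_nf
  · calc ((1 / 2 * ⟪y, B y⟫_ℝ : ℝ) : EReal) = (⟪y, B y⟫_ℝ : EReal) - qsFn U B (B y) := by
          rw [qsFn_map_self hB hpsd hy, ← EReal.coe_sub]
          ring_nf
      _ ≤ econj (qsFn U B) y := le_iSup (fun x => (⟪y, x⟫_ℝ : EReal) - qsFn U B x) (B y)

lemma econj_qsFn_of_notMem (hUcl : IsClosed U) (hUcv : Convex ℝ U) (hU0 : (0 : En n) ∈ U)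
    (hpsd : ∀ x, 0 ≤ ⟪x, B x⟫_ℝ) {y : En n} (hy : y ∉ U) : econj (qsFn U B) y = ⊤ := by
  obtain ⟨z, hzU, hzy⟩ := exists_inner_le_one_lt_inner hUcl hUcv hU0 hy
  refine (EReal.eq_top_iff_forall_lt _).2 fun M => ?_
  set t := (|M| + 1) / (⟪z, y⟫_ℝ - 1)
  have ht : 0 < t := by have := sub_pos.2 hzy; positivity
  have hφ : qsFn U B (t • z) ≤ t := qsFn_le_coe_iff.2 fun u hu => by
    rw [real_inner_smul_left]
    nlinarith [hpsd u, hzU u hu]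
  have hM : M < t * (⟪z, y⟫_ℝ - 1) := by
    rw [div_mul_cancel₀ _ (sub_pos.2 hzy).ne']
    linarith [le_abs_self M]
  calc (M : EReal) < ((⟪y, t • z⟫_ℝ - t : ℝ) : EReal) := by
        rw [real_inner_smul_right, real_inner_comm]
        exact_mod_cast (by linarith : M < t * ⟪z, y⟫_ℝ - t)
    _ ≤ (⟪y, t • z⟫_ℝ : EReal) - qsFn U B (t • z) := by
        rw [EReal.coe_sub]
        exact EReal.sub_le_sub le_rfl hφ
    _ ≤ econj (qsFn U B) y := le_iSup (fun x => (⟪y, x⟫_ℝ : EReal) - qsFn U B x) (t • z)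

end QuadraticSupport

section Scalings

variable {E : Type*} [NormedAddCommGroup E] [NormedSpace ℝ E] {U : Set E} {w : E}

def scalings (U : Set E) (w : E) : Set ℝ := {μ | 0 ≤ μ ∧ w ∈ μ • U}

lemma scalings_bddBelow : BddBelow (scalings U w) := ⟨0, fun _ h => h.1⟩

lemma mem_scalings_of_le (hUcv : Convex ℝ U) (hU0 : (0 : E) ∈ U) {l l' : ℝ}
    (hl : l ∈ scalings U w) (hle : l ≤ l') : l' ∈ scalings U w := by
  obtain ⟨hl0, u, hu, hlu⟩ := hl
  rcases (hl0.trans hle).eq_or_lt with h | h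
  · obtain rfl : l' = l := le_antisymm (h ▸ hl0) hle
    exact ⟨hl0, u, hu, hlu⟩
  · refine ⟨h.le, (l / l') • u, hUcv.smul_mem_of_zero_mem hU0 hu ⟨by positivity,
      div_le_one_of_le₀ hle h.le⟩, ?_⟩
    simp only [smul_smul, mul_div_cancel₀ _ h.ne', ← hlu]

lemma sInf_scalings_mem (hUcl : IsClosed U) (h : (scalings U w).Nonempty)
    (hpos : 0 < sInf (scalings U w)) : sInf (scalings U w) ∈ scalings U w := by
  set γ := sInf (scalings U w)
  have hS : ∀ μ ∈ scalings U w, 0 < μ := fun μ hμ => hpos.trans_le (csInf_le scalings_bddBelow hμ)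
  have hsub : (fun μ : ℝ => μ⁻¹ • w) '' scalings U w ⊆ U := by
    rintro _ ⟨μ, hμ, rfl⟩
    exact (mem_smul_set_iff_inv_smul_mem₀ (hS μ hμ).ne' _ _).1 hμ.2
  have hγ : γ⁻¹ • w ∈ U := hUcl.closure_subset_iff.2 hsub <|
    ((continuousAt_inv₀ hpos.ne').smul continuousAt_const).continuousWithinAt.mem_closure_image
      (csInf_mem_closure h scalings_bddBelow)
  exact ⟨hpos.le, (mem_smul_set_iff_inv_smul_mem₀ hpos.ne' _ _).2 hγ⟩

lemma mem_smul_of_sInf_scalings_le (hUcl : IsClosed U) (hUcv : Convex ℝ U)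
    (hU0 : (0 : E) ∈ U) (h : (scalings U w).Nonempty) {μ : ℝ} (hμ : 0 < μ)
    (hle : sInf (scalings U w) ≤ μ) : w ∈ μ • U := by
  rcases hle.lt_or_eq with hlt | heq
  · obtain ⟨l, hl, hlμ⟩ := (csInf_lt_iff scalings_bddBelow h).1 hlt
    exact (mem_scalings_of_le hUcv hU0 hl hlμ.le).2
  · exact (heq ▸ sInf_scalings_mem hUcl h (heq ▸ hμ)).2

lemma add_mem_of_forall_mem_smul (hUcl : IsClosed U) (hUcv : Convex ℝ U)
    (hw : ∀ μ : ℝ, 0 < μ → w ∈ μ • U) {x : E} (hx : x ∈ U) : x + w ∈ U := by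
  have hmem : ∀ ε ∈ Ioo (0 : ℝ) 1, (1 - ε) • x + w ∈ U := fun ε hε => by
    have hwε : ε⁻¹ • w ∈ U := (mem_smul_set_iff_inv_smul_mem₀ hε.1.ne' _ _).1 (hw ε hε.1)
    simpa [smul_smul, hε.1.ne'] using hUcv hx hwε (sub_nonneg.2 hε.2.le) hε.1.le (by ring)
  have hlim : Tendsto (fun ε : ℝ => (1 - ε) • x + w) (𝓝[>] 0) (𝓝 (x + w)) := by
    have hc : Continuous fun ε : ℝ => (1 - ε) • x + w := by fun_prop
    simpa using (hc.tendsto 0).mono_left nhdsWithin_le_nhds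
  exact hUcl.mem_of_tendsto hlim (eventually_of_mem (Ioo_mem_nhdsGT one_pos) hmem)

end Scalings

section Gauge

variable {n : ℕ} {U : Set (En n)} {w : En n}

lemma egaugeFn_eq_sInf_image : egaugeFn U w = sInf ((↑) '' scalings U w : Set EReal) := by
  simp only [egaugeFn, scalings]
  congr 1
  ext
  simp [eq_comm, and_assoc]

lemma egaugeFn_eq_top (h : ¬ (scalings U w).Nonempty) : egaugeFn U w = ⊤ := by
  rw [egaugeFn_eq_sInf_image, not_nonempty_iff_eq_empty.1 h, image_empty, sInf_empty]

lemma egaugeFn_eq_coe_sInf (h : (scalings U w).Nonempty) :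
    egaugeFn U w = ((sInf (scalings U w) : ℝ) : EReal) := by
  rw [egaugeFn_eq_sInf_image, Monotone.map_csInf_of_continuousAt
    continuous_coe_real_ereal.continuousAt EReal.coe_strictMono.monotone h scalings_bddBelow]

end Gauge

section LevelSet

variable {n : ℕ} {U : Set (En n)} {B : En n →L[ℝ] En n} {w : En n} {τ : ℝ}

lemma esupp_lev_le_of_mem_smul {μ : ℝ} (hμ : 0 < μ) (hw : w ∈ μ • U) :
    esupp {x | qsFn U B x ≤ τ} w ≤ ((τ * μ + ⟪w, B w⟫_ℝ / (2 * μ) : ℝ) : EReal) := by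
  obtain ⟨u, hu, rfl⟩ := hw
  refine iSup₂_le fun x hx => EReal.coe_le_coe_iff.2 ?_
  have hxu := qsFn_le_coe_iff.1 hx u hu
  have hq : ⟪μ • u, B (μ • u)⟫_ℝ / (2 * μ) = μ * (1 / 2 * ⟪u, B u⟫_ℝ) := by
    simp only [map_smul, real_inner_smul_left, real_inner_smul_right]
    field_simp
  rw [hq, real_inner_smul_left, real_inner_comm]
  nlinarith

lemma coe_le_esupp_lev (hB : ∀ x y, ⟪B x, y⟫_ℝ = ⟪x, B y⟫_ℝ) (hpsd : ∀ x, 0 ≤ ⟪x, B x⟫_ℝ)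
    {z : En n} (hz : ∀ a ∈ U, ⟪z, a⟫_ℝ ≤ 1) {α : ℝ} (hα : α ^ 2 / 2 * ⟪w, B w⟫_ℝ ≤ τ) :
    ((α * ⟪w, B w⟫_ℝ + (τ - α ^ 2 / 2 * ⟪w, B w⟫_ℝ) * ⟪w, z⟫_ℝ : ℝ) : EReal) ≤
      esupp {x | qsFn U B x ≤ τ} w := by
  set x := α • B w + (τ - α ^ 2 / 2 * ⟪w, B w⟫_ℝ) • z
  have hx : qsFn U B x ≤ τ := qsFn_le_coe_iff.2 fun u hu => by
    have hBw := mul_inner_map_sub_half_le hB hpsd α w u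
    have hz := mul_le_mul_of_nonneg_left (hz u hu) (sub_nonneg.2 hα)
    simp only [x, inner_add_left, real_inner_smul_left]
    linarith
  have hwx : ⟪w, x⟫_ℝ = α * ⟪w, B w⟫_ℝ + (τ - α ^ 2 / 2 * ⟪w, B w⟫_ℝ) * ⟪w, z⟫_ℝ := by
    simp only [x, inner_add_right, real_inner_smul_right]
  rw [← hwx]
  exact le_iSup₂ (f := fun x (_ : x ∈ {x | qsFn U B x ≤ τ}) => (⟪w, x⟫_ℝ : EReal)) x hx

lemma coe_le_esupp_lev_of_notMem_smul (hUcl : IsClosed U) (hUcv : Convex ℝ U)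
    (hU0 : (0 : En n) ∈ U) (hB : ∀ x y, ⟪B x, y⟫_ℝ = ⟪x, B y⟫_ℝ) (hpsd : ∀ x, 0 ≤ ⟪x, B x⟫_ℝ)
    {t : ℝ} (ht : 0 < t) (hw : w ∉ t • U) {α : ℝ} (hα : α ^ 2 / 2 * ⟪w, B w⟫_ℝ ≤ τ) :
    ((α * ⟪w, B w⟫_ℝ + (τ - α ^ 2 / 2 * ⟪w, B w⟫_ℝ) * t : ℝ) : EReal) ≤
      esupp {x | qsFn U B x ≤ τ} w := by
  have hv : t⁻¹ • w ∉ U := fun h => hw ((mem_smul_set_iff_inv_smul_mem₀ ht.ne' _ _).2 h)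
  obtain ⟨z, hzU, hzw⟩ := exists_inner_le_one_lt_inner hUcl hUcv hU0 hv
  rw [real_inner_smul_right, one_lt_inv_mul₀ ht, real_inner_comm] at hzw
  refine le_trans (EReal.coe_le_coe_iff.2 ?_) (coe_le_esupp_lev hB hpsd hzU hα)
  linarith [mul_le_mul_of_nonneg_left hzw.le (sub_nonneg.2 hα)]

lemma esupp_lev_nonpos (hτ : 0 < τ) (hw : ∀ μ : ℝ, 0 < μ → w ∈ μ • U) (hq : ⟪w, B w⟫_ℝ = 0) :
    esupp {x | qsFn U B x ≤ τ} w ≤ 0 := by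
  refine EReal.le_of_forall_lt_iff_le.1 fun z hz => ?_
  have hμ : 0 < z / τ := div_pos (EReal.coe_pos.1 hz) hτ
  calc esupp {x | qsFn U B x ≤ τ} w ≤ ((τ * (z / τ) + ⟪w, B w⟫_ℝ / (2 * (z / τ)) : ℝ) : EReal) :=
        esupp_lev_le_of_mem_smul hμ (hw (z / τ) hμ)
    _ = z := by
        rw [hq, zero_div, add_zero, mul_div_cancel₀ _ hτ.ne']

lemma esupp_lev_eq_top (hUcl : IsClosed U) (hUcv : Convex ℝ U) (hU0 : (0 : En n) ∈ U)
    (hB : ∀ x y, ⟪B x, y⟫_ℝ = ⟪x, B y⟫_ℝ) (hpsd : ∀ x, 0 ≤ ⟪x, B x⟫_ℝ) (hτ : 0 < τ)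
    (hS : ¬ (scalings U w).Nonempty) : esupp {x | qsFn U B x ≤ τ} w = ⊤ := by
  refine (EReal.eq_top_iff_forall_lt _).2 fun M => ?_
  have ht : 0 < (|M| + 1) / τ := by positivity
  have hw : w ∉ ((|M| + 1) / τ) • U := fun hw => hS ⟨_, ht.le, hw⟩
  refine lt_of_lt_of_le ?_
    (coe_le_esupp_lev_of_notMem_smul hUcl hUcv hU0 hB hpsd ht hw (α := 0) (by simpa using hτ.le))
  rw [EReal.coe_lt_coe_iff]
  field_simp
  nlinarith [mul_pos hτ (by linarith [le_abs_self M] : 0 < |M| + 1 - M)]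

lemma mul_sqrt_div_sqrt_add_div (hτ : 0 < τ) {q : ℝ} (hq : 0 < q) :
    τ * (√q / √(2 * τ)) + q / (2 * (√q / √(2 * τ))) = √(2 * τ) * √q := by
  have hs : √(2 * τ) ^ 2 = 2 * τ := Real.sq_sqrt (by positivity)
  have hb : √q ^ 2 = q := Real.sq_sqrt hq.le
  have hb0 : 0 < √q := Real.sqrt_pos.2 hq
  have hs0 : 0 < √(2 * τ) := Real.sqrt_pos.2 (by positivity)
  set s := √(2 * τ)
  set b := √q
  rw [← hb, show τ = s ^ 2 / 2 by rw [hs]; ring]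
  field_simp
  ring

lemma esupp_lev_eq_of_sqrt_div_lt (hUcl : IsClosed U) (hUcv : Convex ℝ U) (hU0 : (0 : En n) ∈ U)
    (hB : ∀ x y, ⟪B x, y⟫_ℝ = ⟪x, B y⟫_ℝ) (hpsd : ∀ x, 0 ≤ ⟪x, B x⟫_ℝ) (hτ : 0 < τ)
    (hS : (scalings U w).Nonempty)
    (hlt : √⟪w, B w⟫_ℝ / √(2 * τ) < sInf (scalings U w)) :
    esupp {x | qsFn U B x ≤ τ} w =
      ((τ * sInf (scalings U w) + ⟪w, B w⟫_ℝ / (2 * sInf (scalings U w)) : ℝ) : EReal) := by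
  set γ := sInf (scalings U w)
  set q := ⟪w, B w⟫_ℝ
  have hγ : 0 < γ := lt_of_le_of_lt (by positivity) hlt
  have hα : γ⁻¹ ^ 2 / 2 * q ≤ τ := by
    rw [← Real.sqrt_div' _ (by positivity), Real.sqrt_lt' hγ, div_lt_iff₀ (by positivity)] at hlt
    field_simp
    linarith
  refine le_antisymm
    (esupp_lev_le_of_mem_smul hγ (mem_smul_of_sInf_scalings_le hUcl hUcv hU0 hS hγ le_rfl)) ?_
  have hlow : ∀ t ∈ Ioo 0 γ, ((γ⁻¹ * q + (τ - γ⁻¹ ^ 2 / 2 * q) * t : ℝ) : EReal) ≤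
      esupp {x | qsFn U B x ≤ τ} w := fun t ht =>
    coe_le_esupp_lev_of_notMem_smul hUcl hUcv hU0 hB hpsd ht.1
      (fun hw => ht.2.not_ge (csInf_le scalings_bddBelow ⟨ht.1.le, hw⟩)) hα
  have hlim : Tendsto (fun t => ((γ⁻¹ * q + (τ - γ⁻¹ ^ 2 / 2 * q) * t : ℝ) : EReal)) (𝓝[<] γ)
      (𝓝 ((γ⁻¹ * q + (τ - γ⁻¹ ^ 2 / 2 * q) * γ : ℝ) : EReal)) :=
    have hc : Continuous fun t : ℝ => γ⁻¹ * q + (τ - γ⁻¹ ^ 2 / 2 * q) * t := by fun_prop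
    EReal.tendsto_coe.2 ((hc.tendsto γ).mono_left nhdsWithin_le_nhds)
  convert le_of_tendsto hlim (eventually_of_mem (Ioo_mem_nhdsLT hγ) hlow) using 2
  field_simp
  ring

lemma esupp_lev_eq_of_le_sqrt_div (hUcl : IsClosed U) (hUcv : Convex ℝ U) (hU0 : (0 : En n) ∈ U)
    (hB : ∀ x y, ⟪B x, y⟫_ℝ = ⟪x, B y⟫_ℝ) (hpsd : ∀ x, 0 ≤ ⟪x, B x⟫_ℝ) (hτ : 0 < τ)
    (hS : (scalings U w).Nonempty)
    (hle : sInf (scalings U w) ≤ √⟪w, B w⟫_ℝ / √(2 * τ)) :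
    esupp {x | qsFn U B x ≤ τ} w = ((√(2 * τ) * √⟪w, B w⟫_ℝ : ℝ) : EReal) := by
  set q := ⟪w, B w⟫_ℝ
  have hmem : ∀ μ, sInf (scalings U w) ≤ μ → 0 < μ → w ∈ μ • U := fun μ hγμ hμ =>
    mem_smul_of_sInf_scalings_le hUcl hUcv hU0 hS hμ hγμ
  have hq0 : 0 ≤ q := hpsd w
  rcases hq0.eq_or_lt with hq | hq
  · rw [← hq, Real.sqrt_zero, mul_zero, EReal.coe_zero]
    refine le_antisymm (esupp_lev_nonpos hτ (fun μ hμ => hmem μ ?_ hμ) hq.symm) ?_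
    · rw [← hq, Real.sqrt_zero, zero_div] at hle
      exact hle.trans hμ.le
    · simpa using coe_le_esupp_lev hB hpsd (U := U) (w := w) (z := 0) (by simp) (α := 0)
        (by simpa using hτ.le)
  · have hμ : 0 < √q / √(2 * τ) := by positivity
    refine le_antisymm ?_ ?_
    · rw [← mul_sqrt_div_sqrt_add_div hτ hq]
      exact esupp_lev_le_of_mem_smul hμ (hmem _ hle hμ)
    · have hα : (√(2 * τ) / √q) ^ 2 / 2 * q = τ := by
        rw [div_pow, Real.sq_sqrt (by positivity), Real.sq_sqrt hq.le]
        field_simp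
      convert coe_le_esupp_lev hB hpsd (U := U) (w := w) (z := 0) (by simp) hα.le using 2
      rw [inner_zero_right, mul_zero, add_zero, div_mul_eq_mul_div, mul_div_assoc, Real.div_sqrt]

end LevelSet

section Perspective

variable {n : ℕ} {U : Set (En n)} {B : En n →L[ℝ] En n} {w : En n}

lemma setOf_econj_qsFn_ne_top (hUcl : IsClosed U) (hUcv : Convex ℝ U) (hU0 : (0 : En n) ∈ U)
    (hB : ∀ x y, ⟪B x, y⟫_ℝ = ⟪x, B y⟫_ℝ) (hpsd : ∀ x, 0 ≤ ⟪x, B x⟫_ℝ) :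
    {x | econj (qsFn U B) x ≠ ⊤} = U := by
  ext x
  by_cases hx : x ∈ U
  · simp only [mem_ofPred_eq, econj_qsFn_of_mem hB hpsd hx, hx, iff_true]
    exact EReal.coe_ne_top _
  · simp [hx, econj_qsFn_of_notMem hUcl hUcv hU0 hpsd hx]

lemma ehorizon_econj_qsFn_eq_zero (hUcl : IsClosed U) (hUcv : Convex ℝ U)
    (hU0 : (0 : En n) ∈ U) (hB : ∀ x y, ⟪B x, y⟫_ℝ = ⟪x, B y⟫_ℝ) (hpsd : ∀ x, 0 ≤ ⟪x, B x⟫_ℝ)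
    (hw : ∀ μ : ℝ, 0 < μ → w ∈ μ • U) (hq : ⟪w, B w⟫_ℝ = 0) :
    ehorizon (econj (qsFn U B)) w = 0 := by
  have hterm : ∀ x ∈ U, econj (qsFn U B) (x + w) - econj (qsFn U B) x = 0 := fun x hx => by
    rw [econj_qsFn_of_mem hB hpsd (add_mem_of_forall_mem_smul hUcl hUcv hw hx),
      econj_qsFn_of_mem hB hpsd hx, ← EReal.coe_sub, inner_add_map_add hB, hq,
      inner_map_eq_zero_of_inner_self_eq_zero hB hpsd hq]
    norm_num
  rw [ehorizon, setOf_econj_qsFn_ne_top hUcl hUcv hU0 hB hpsd]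
  exact le_antisymm (iSup₂_le fun x hx => (hterm x hx).le) (le_iSup₂_of_le 0 hU0 (hterm 0 hU0).ge)

lemma ehorizon_econj_qsFn_eq_top (hUcl : IsClosed U) (hUcv : Convex ℝ U)
    (hU0 : (0 : En n) ∈ U) (hB : ∀ x y, ⟪B x, y⟫_ℝ = ⟪x, B y⟫_ℝ) (hpsd : ∀ x, 0 ≤ ⟪x, B x⟫_ℝ)
    (h : ¬ ((∀ μ : ℝ, 0 < μ → w ∈ μ • U) ∧ ⟪w, B w⟫_ℝ = 0)) :
    ehorizon (econj (qsFn U B)) w = ⊤ := by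
  rw [ehorizon, setOf_econj_qsFn_ne_top hUcl hUcv hU0 hB hpsd]
  by_cases hadd : ∀ x ∈ U, x + w ∈ U
  · have hnat : ∀ k : ℕ, (k : ℝ) • w ∈ U := fun k => by
      induction k with
      | zero => simpa using hU0
      | succ k ih => simpa [add_smul] using hadd _ ih
    have hray : ∀ μ : ℝ, 0 < μ → w ∈ μ • U := fun μ hμ => by
      obtain ⟨k, hk⟩ := exists_nat_gt μ⁻¹
      have hk0 : (0 : ℝ) < k := (inv_pos.2 hμ).trans hk
      have := hUcv.smul_mem_of_zero_mem hU0 (hnat k)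
        ⟨div_nonneg (inv_pos.2 hμ).le hk0.le, (div_le_one hk0).2 hk.le⟩
      rw [smul_smul, div_mul_cancel₀ _ hk0.ne'] at this
      exact (mem_smul_set_iff_inv_smul_mem₀ hμ.ne' _ _).2 this
    have hq : 0 < ⟪w, B w⟫_ℝ := (hpsd w).lt_of_ne' fun hq => h ⟨hray, hq⟩
    refine (EReal.eq_top_iff_forall_lt _).2 fun M => ?_
    obtain ⟨k, hk⟩ := exists_nat_gt (M / ⟪w, B w⟫_ℝ)
    rw [div_lt_iff₀ hq] at hk
    have hterm : econj (qsFn U B) ((k : ℝ) • w + w) - econj (qsFn U B) ((k : ℝ) • w) =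
        (((k + 1 / 2) * ⟪w, B w⟫_ℝ : ℝ) : EReal) := by
      rw [econj_qsFn_of_mem hB hpsd (hadd _ (hnat k)), econj_qsFn_of_mem hB hpsd (hnat k),
        ← EReal.coe_sub, inner_add_map_add hB]
      simp only [map_smul, real_inner_smul_left, real_inner_smul_right]
      ring_nf
    refine lt_of_lt_of_le ?_ (le_iSup₂_of_le _ (hnat k) hterm.ge)
    exact_mod_cast (by nlinarith : M < (k + 1 / 2) * ⟪w, B w⟫_ℝ)
  · obtain ⟨x, hx, hxw⟩ := not_forall₂.1 hadd
    refine top_le_iff.1 (le_iSup₂_of_le x hx ?_)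
    rw [econj_qsFn_of_notMem hUcl hUcv hU0 hpsd hxw, econj_qsFn_of_mem hB hpsd hx,
      EReal.top_sub_coe]

lemma epersp_zero_right (h : En n → EReal) (z : En n) : epersp h (z, 0) = ehorizon h z := by
  simp [epersp]

lemma epersp_econj_qsFn_of_mem (hB : ∀ x y, ⟪B x, y⟫_ℝ = ⟪x, B y⟫_ℝ)
    (hpsd : ∀ x, 0 ≤ ⟪x, B x⟫_ℝ) {μ : ℝ} (hμ : 0 < μ) (hw : w ∈ μ • U) :
    epersp (econj (qsFn U B)) (w, μ) = ((⟪w, B w⟫_ℝ / (2 * μ) : ℝ) : EReal) := by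
  rw [epersp, if_pos hμ,
    econj_qsFn_of_mem hB hpsd ((mem_smul_set_iff_inv_smul_mem₀ hμ.ne' _ _).1 hw),
    ← EReal.coe_mul, EReal.coe_eq_coe_iff]
  simp only [map_smul, real_inner_smul_left, real_inner_smul_right]
  field_simp

lemma epersp_econj_qsFn_of_notMem (hUcl : IsClosed U) (hUcv : Convex ℝ U)
    (hU0 : (0 : En n) ∈ U) (hpsd : ∀ x, 0 ≤ ⟪x, B x⟫_ℝ) {μ : ℝ} (hμ : 0 < μ)
    (hw : w ∉ μ • U) : epersp (econj (qsFn U B)) (w, μ) = ⊤ := by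
  rw [epersp, if_pos hμ, econj_qsFn_of_notMem hUcl hUcv hU0 hpsd
    fun h => hw ((mem_smul_set_iff_inv_smul_mem₀ hμ.ne' _ _).2 h)]
  exact EReal.coe_mul_top_of_pos hμ

end Perspective

section Duality

variable {n : ℕ} {U : Set (En n)} {B : En n →L[ℝ] En n} {w : En n} {τ : ℝ}

lemma esupp_lev_le_mul_add_epersp (hUcl : IsClosed U) (hUcv : Convex ℝ U)
    (hU0 : (0 : En n) ∈ U) (hB : ∀ x y, ⟪B x, y⟫_ℝ = ⟪x, B y⟫_ℝ) (hpsd : ∀ x, 0 ≤ ⟪x, B x⟫_ℝ)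
    (hτ : 0 < τ) {μ : ℝ} (hμ : 0 ≤ μ) :
    esupp {x | qsFn U B x ≤ τ} w ≤ ((τ * μ : ℝ) : EReal) + epersp (econj (qsFn U B)) (w, μ) := by
  rcases hμ.eq_or_lt with rfl | hμ
  · rw [epersp_zero_right]
    by_cases h : (∀ μ : ℝ, 0 < μ → w ∈ μ • U) ∧ ⟪w, B w⟫_ℝ = 0
    · rw [ehorizon_econj_qsFn_eq_zero hUcl hUcv hU0 hB hpsd h.1 h.2, mul_zero, EReal.coe_zero,
        add_zero]
      exact esupp_lev_nonpos hτ h.1 h.2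
    · rw [ehorizon_econj_qsFn_eq_top hUcl hUcv hU0 hB hpsd h, EReal.coe_add_top]
      exact le_top
  · by_cases hw : w ∈ μ • U
    · rw [epersp_econj_qsFn_of_mem hB hpsd hμ hw, ← EReal.coe_add]
      exact esupp_lev_le_of_mem_smul hμ hw
    · rw [epersp_econj_qsFn_of_notMem hUcl hUcv hU0 hpsd hμ hw, EReal.coe_add_top]
      exact le_top

lemma mul_add_epersp_le_esupp_lev (hUcl : IsClosed U) (hUcv : Convex ℝ U)
    (hU0 : (0 : En n) ∈ U) (hB : ∀ x y, ⟪B x, y⟫_ℝ = ⟪x, B y⟫_ℝ) (hpsd : ∀ x, 0 ≤ ⟪x, B x⟫_ℝ)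
    (hτ : 0 < τ) (hS : (scalings U w).Nonempty) {μ : ℝ}
    (hμ : μ = max (sInf (scalings U w)) (√⟪w, B w⟫_ℝ / √(2 * τ))) :
    ((τ * μ : ℝ) : EReal) + epersp (econj (qsFn U B)) (w, μ) ≤ esupp {x | qsFn U B x ≤ τ} w := by
  have hmem : ∀ μ, sInf (scalings U w) ≤ μ → 0 < μ → w ∈ μ • U := fun μ hγμ hμ =>
    mem_smul_of_sInf_scalings_le hUcl hUcv hU0 hS hμ hγμ
  rcases lt_or_ge (√⟪w, B w⟫_ℝ / √(2 * τ)) (sInf (scalings U w)) with hlt | hle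
  · rw [max_eq_left hlt.le] at hμ
    have hμ0 : 0 < μ := hμ ▸ lt_of_le_of_lt (by positivity) hlt
    rw [epersp_econj_qsFn_of_mem hB hpsd hμ0 (hmem μ hμ.ge hμ0), ← EReal.coe_add,
      esupp_lev_eq_of_sqrt_div_lt hUcl hUcv hU0 hB hpsd hτ hS hlt, hμ]
  · rw [max_eq_right hle] at hμ
    rw [esupp_lev_eq_of_le_sqrt_div hUcl hUcv hU0 hB hpsd hτ hS hle]
    rcases (hpsd w).eq_or_lt with hq | hq
    · rw [← hq, Real.sqrt_zero, zero_div] at hle hμ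
      rw [hμ, epersp_zero_right, ehorizon_econj_qsFn_eq_zero hUcl hUcv hU0 hB hpsd
        (fun μ hμ => hmem μ (hle.trans hμ.le) hμ) hq.symm, ← hq]
      simp
    · have hμ0 : 0 < μ := hμ ▸ by positivity
      rw [epersp_econj_qsFn_of_mem hB hpsd hμ0 (hmem μ (hμ ▸ hle) hμ0), ← EReal.coe_add, hμ,
        mul_sqrt_div_sqrt_add_div hτ hq]

end Duality

theorem stmt14_general {n : ℕ} (U : Set (En n))
    (hUcl : IsClosed U) (hUcv : Convex ℝ U) (hU0 : (0 : En n) ∈ U)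
    (B : En n →L[ℝ] En n)
    (hsymm : ∀ x y : En n, (inner ℝ (B x) y : ℝ) = (inner ℝ x (B y) : ℝ))
    (hpsd : ∀ x : En n, 0 ≤ (inner ℝ x (B x) : ℝ))
    (τ : ℝ) (hτ : 0 < τ) (w : En n) :
    ((((Real.sqrt (inner ℝ w (B w) : ℝ) / Real.sqrt (2 * τ) : ℝ)) : EReal) < egaugeFn U w →
      esupp {x : En n | qsFn U B x ≤ (τ : EReal)} w =
        (τ : EReal) * egaugeFn U w +
          ((((inner ℝ w (B w) : ℝ)) : EReal) / (2 * egaugeFn U w))) ∧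
    (egaugeFn U w ≤ (((Real.sqrt (inner ℝ w (B w) : ℝ) / Real.sqrt (2 * τ) : ℝ)) : EReal) →
      esupp {x : En n | qsFn U B x ≤ (τ : EReal)} w =
        (((Real.sqrt (2 * τ) * Real.sqrt (inner ℝ w (B w) : ℝ) : ℝ)) : EReal)) ∧
    (∀ μ : ℝ, 0 ≤ μ →
      (μ : EReal) =
          max (egaugeFn U w)
            (((Real.sqrt (inner ℝ w (B w) : ℝ) / Real.sqrt (2 * τ) : ℝ)) : EReal) →
      (((τ * μ : ℝ)) : EReal) + epersp (econj (qsFn U B)) (w, μ) =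
        ⨅ μ' : ℝ, ⨅ _ : 0 ≤ μ',
          (((τ * μ' : ℝ)) : EReal) + epersp (econj (qsFn U B)) (w, μ')) := by
  refine ⟨fun hlt => ?_, fun hle => ?_, fun μ hμ0 hμ => ?_⟩
  · by_cases hS : (scalings U w).Nonempty
    · rw [egaugeFn_eq_coe_sInf hS] at hlt ⊢
      rw [esupp_lev_eq_of_sqrt_div_lt hUcl hUcv hU0 hsymm hpsd hτ hS (EReal.coe_lt_coe_iff.1 hlt)]
      norm_cast
    · rw [egaugeFn_eq_top hS, esupp_lev_eq_top hUcl hUcv hU0 hsymm hpsd hτ hS,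
        EReal.coe_mul_top_of_pos hτ, EReal.mul_top_of_pos two_pos, EReal.div_top, add_zero]
  · have hS : (scalings U w).Nonempty := by
      by_contra hS
      rw [egaugeFn_eq_top hS, top_le_iff] at hle
      exact EReal.coe_ne_top _ hle
    rw [egaugeFn_eq_coe_sInf hS, EReal.coe_le_coe_iff] at hle
    exact esupp_lev_eq_of_le_sqrt_div hUcl hUcv hU0 hsymm hpsd hτ hS hle
  · have hS : (scalings U w).Nonempty := by
      by_contra hS
      rw [egaugeFn_eq_top hS, max_eq_left le_top] at hμ
      exact EReal.coe_ne_top μ hμ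
    rw [egaugeFn_eq_coe_sInf hS, ← EReal.coe_strictMono.monotone.map_max, EReal.coe_eq_coe_iff] at hμ
    exact le_antisymm
      (le_iInf₂ fun μ' hμ' => (mul_add_epersp_le_esupp_lev hUcl hUcv hU0 hsymm hpsd hτ hS hμ).trans
        (esupp_lev_le_mul_add_epersp hUcl hUcv hU0 hsymm hpsd hτ hμ'))
      (iInf₂_le μ hμ0)

/-- explicit formula for the support function of `lev(φ,τ)` for a
quadratic support function `φ`, and attainment of
`inf_{λ ≥ 0}[τλ + (φ*)^π(w,λ)]` at `λ = max{γ(w|U), ‖w‖_B/√(2τ)}`. -/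
theorem stmt14 {n : ℕ} (U : Set (En n))
    (hUne : U.Nonempty) (hUcl : IsClosed U) (hUcv : Convex ℝ U) (hU0 : (0 : En n) ∈ U)
    (B : En n →L[ℝ] En n)
    (hsymm : ∀ x y : En n, (inner ℝ (B x) y : ℝ) = (inner ℝ x (B y) : ℝ))
    (hpsd : ∀ x : En n, 0 ≤ (inner ℝ x (B x) : ℝ))
    (τ : ℝ) (hτ : 0 < τ) (w : En n) :
    ((((Real.sqrt (inner ℝ w (B w) : ℝ) / Real.sqrt (2 * τ) : ℝ)) : EReal) < egaugeFn U w →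
      esupp {x : En n | qsFn U B x ≤ (τ : EReal)} w =
        (τ : EReal) * egaugeFn U w +
          ((((inner ℝ w (B w) : ℝ)) : EReal) / (2 * egaugeFn U w))) ∧
    (egaugeFn U w ≤ (((Real.sqrt (inner ℝ w (B w) : ℝ) / Real.sqrt (2 * τ) : ℝ)) : EReal) →
      esupp {x : En n | qsFn U B x ≤ (τ : EReal)} w =
        (((Real.sqrt (2 * τ) * Real.sqrt (inner ℝ w (B w) : ℝ) : ℝ)) : EReal)) ∧
    (∀ μ : ℝ, 0 ≤ μ →
      (μ : EReal) =
          max (egaugeFn U w)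
            (((Real.sqrt (inner ℝ w (B w) : ℝ) / Real.sqrt (2 * τ) : ℝ)) : EReal) →
      (((τ * μ : ℝ)) : EReal) + epersp (econj (qsFn U B)) (w, μ) =
        ⨅ μ' : ℝ, ⨅ _ : 0 ≤ μ',
          (((τ * μ' : ℝ)) : EReal) + epersp (econj (qsFn U B)) (w, μ')) :=
  stmt14_general U hUcl hUcv hU0 B hsymm hpsd τ hτ w
end
end
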